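/- Let Φ and ν denote the standard normal cumulative distribution function and density, let p₁ be an even polynomial and p₂ an odd polynomial, and let (F_n)_{n≥1} be a sequence of functions ℝ → [0,1] satisfying sup_{x∈ℝ} |F_n(x) − Φ(x) − n^{−1/2}·p₁(x)·ν(x) − n^{−1}·p₂(x)·ν(x)| ≤ K·n^{−3/2} for some constant K and all n. Fix q₀ > 0 and set D = −p₂(√q₀). Then F_n(√q₀ + D/n) − F_n(−√q₀ − D/n) = (2Φ(√q₀) − 1) + O(n^{−3/2}), i.e., there is a constant C with |F_n(√q₀ + D/n) − F_n(−√q₀ − D/n) − (2Φ(√q₀) − 1)| ≤ C·n^{−3/2} for all sufficiently large n. -/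

import Mathlib

open ProbabilityTheory

noncomputable section

/-- The standard normal density `ν(x) = (2π)^{-1/2} e^{-x²/2}`. -/
def stdNormalPDF (x : ℝ) : ℝ := (Real.sqrt (2 * Real.pi))⁻¹ * Real.exp (-(x ^ 2) / 2)

/-- The standard normal cumulative distribution function `Φ`. -/
def stdNormalCDF (x : ℝ) : ℝ := ((gaussianReal 0 1) (Set.Iic x)).toReal

/-!
By the symmetries `Φ(-x) = 1 - Φ(x)`, `ν(-x) = ν(x)` and the parities of `p₁`, `p₂`, the
`n^{-1/2}` term cancels in the symmetric difference of the Edgeworth approximation, which equals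
`2Φ(x) - 1 + 2n⁻¹p₂(x)ν(x)`. At `x = √q₀ + D/n` the linear Taylor term `2(D/n)ν(√q₀)` of `Φ`
cancels `2n⁻¹p₂(√q₀)ν(√q₀)` by the choice of `D`. What is left is the second-order Taylor
remainder of `Φ` (bounded since `ν` is Lipschitz) and `n⁻¹` times the increment of the
differentiable function `p₂ν` over a step of size `O(1/n)`; both are `O(n⁻²)`.
-/

open MeasureTheory Set Filter Topology Asymptotics Polynomial

open scoped NNReal

lemma norm_image_sub_sub_smul_deriv_le_of_lipschitzWith {E : Type*} [NormedAddCommGroup E]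
    [NormedSpace ℝ E] {f f' : ℝ → E} {L : ℝ≥0} (hf : ∀ x, HasDerivAt f (f' x) x)
    (hf' : LipschitzWith L f') (a b : ℝ) :
    ‖f b - f a - (b - a) • f' a‖ ≤ L * (b - a) ^ 2 := by
  have hderiv : ∀ t ∈ uIcc a b,
      HasDerivWithinAt (fun t => f t - t • f' a) (f' t - f' a) (uIcc a b) t := fun t _ => by
    have := ((hf t).sub ((hasDerivAt_id t).smul_const (f' a))).hasDerivWithinAt (s := uIcc a b)
    rwa [one_smul] at this
  have hbound : ∀ t ∈ uIcc a b, ‖f' t - f' a‖ ≤ L * |b - a| := fun t ht => by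
    rw [← dist_eq_norm]
    exact (hf'.dist_le_mul t a).trans (mul_le_mul_of_nonneg_left (abs_sub_left_of_mem_uIcc ht) L.2)
  calc ‖f b - f a - (b - a) • f' a‖ = ‖(f b - b • f' a) - (f a - a • f' a)‖ := by
        rw [sub_smul]; abel_nf
    _ ≤ L * |b - a| * ‖b - a‖ := (convex_uIcc a b).norm_image_sub_le_of_norm_hasDerivWithin_le
        hderiv hbound left_mem_uIcc right_mem_uIcc
    _ = L * (b - a) ^ 2 := by rw [Real.norm_eq_abs, mul_assoc, ← sq, sq_abs]

lemma stdNormalPDF_eq_gaussianPDFReal : stdNormalPDF = gaussianPDFReal 0 1 := by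
  ext x
  simp [stdNormalPDF, gaussianPDFReal]

lemma stdNormalPDF_neg (x : ℝ) : stdNormalPDF (-x) = stdNormalPDF x := by
  simp [stdNormalPDF]

lemma hasDerivAt_stdNormalPDF (x : ℝ) : HasDerivAt stdNormalPDF (-x * stdNormalPDF x) x := by
  have hexponent : HasDerivAt (fun y : ℝ => -(y ^ 2) / 2) (-x) x := by
    simpa [neg_div, mul_div_cancel_left₀] using (hasDerivAt_pow 2 x).neg.div_const 2
  exact (hexponent.exp.const_mul _).congr_deriv (by rw [stdNormalPDF]; ring)

lemma abs_mul_stdNormalPDF_le_one (x : ℝ) : |x * stdNormalPDF x| ≤ 1 := by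
  have hmul : x * stdNormalPDF x = (Real.sqrt (2 * Real.pi))⁻¹ * Real.mulExpNegMulSq (1 / 2) x := by
    rw [stdNormalPDF, Real.mulExpNegSq_apply]; ring_nf
  have hpi : 2 ≤ Real.sqrt (2 * Real.pi) :=
    Real.le_sqrt_of_sq_le (by nlinarith [Real.pi_gt_three])
  have hhalf : (Real.sqrt (1 / 2))⁻¹ ≤ 2 := by
    rw [inv_le_comm₀ (by positivity) two_pos]
    exact Real.le_sqrt_of_sq_le (by norm_num)
  rw [hmul, abs_mul, abs_inv, abs_of_pos (by positivity)]
  calc (Real.sqrt (2 * Real.pi))⁻¹ * |Real.mulExpNegMulSq (1 / 2) x| ≤ 2⁻¹ * 2 := by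
        gcongr
        exact (Real.abs_mulExpNegMulSq_le (by norm_num)).trans hhalf
    _ = 1 := by norm_num

lemma lipschitzWith_one_stdNormalPDF : LipschitzWith 1 stdNormalPDF :=
  lipschitzWith_of_nnnorm_deriv_le (fun x => (hasDerivAt_stdNormalPDF x).differentiableAt)
    fun x => by
      rw [(hasDerivAt_stdNormalPDF x).deriv, ← NNReal.coe_le_coe, coe_nnnorm, Real.norm_eq_abs,
        neg_mul, abs_neg]
      exact abs_mul_stdNormalPDF_le_one x

lemma continuous_stdNormalPDF : Continuous stdNormalPDF :=
  lipschitzWith_one_stdNormalPDF.continuous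

lemma stdNormalCDF_eq_integral (x : ℝ) : stdNormalCDF x = ∫ t in Iic x, stdNormalPDF t := by
  rw [stdNormalCDF, gaussianReal_apply_eq_integral 0 one_ne_zero, ENNReal.toReal_ofReal,
    stdNormalPDF_eq_gaussianPDFReal]
  exact setIntegral_nonneg measurableSet_Iic fun t _ => gaussianPDFReal_nonneg 0 1 t

lemma stdNormalCDF_neg (x : ℝ) : stdNormalCDF (-x) = 1 - stdNormalCDF x := by
  have hmap : (gaussianReal 0 1).map (fun x => -x) = gaussianReal 0 1 := by
    simpa using gaussianReal_map_neg (μ := 0) (v := 1)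
  have := nullSingletonClass_gaussianReal (μ := 0) one_ne_zero
  have hpre : (fun x : ℝ => -x) ⁻¹' Iic (-x) = Ici x := by ext; simp
  rw [stdNormalCDF, stdNormalCDF, ← hmap, Measure.map_apply measurable_neg measurableSet_Iic, hpre,
    hmap, measure_congr Ioi_ae_eq_Ici.symm, ← compl_Iic, prob_compl_eq_one_sub measurableSet_Iic,
    ENNReal.toReal_sub_of_le prob_le_one ENNReal.one_ne_top, ENNReal.toReal_one]

lemma hasDerivAt_stdNormalCDF (x : ℝ) : HasDerivAt stdNormalCDF (stdNormalPDF x) x := by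
  have hint : Integrable stdNormalPDF :=
    stdNormalPDF_eq_gaussianPDFReal ▸ integrable_gaussianPDFReal 0 1
  have hFTC : stdNormalCDF = fun y => stdNormalCDF 0 + ∫ t in (0 : ℝ)..y, stdNormalPDF t := by
    ext y
    rw [stdNormalCDF_eq_integral, stdNormalCDF_eq_integral,
      ← intervalIntegral.integral_Iic_sub_Iic hint.integrableOn hint.integrableOn]
    ring
  rw [hFTC]
  exact ((continuous_stdNormalPDF.integral_hasStrictDerivAt 0 x).hasDerivAt).const_add _

def edgeworthApprox (p₁ p₂ : ℝ[X]) (n : ℕ) (x : ℝ) : ℝ :=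
  stdNormalCDF x + ((n : ℝ) ^ ((1 : ℝ) / 2))⁻¹ * p₁.eval x * stdNormalPDF x
    + (n : ℝ)⁻¹ * p₂.eval x * stdNormalPDF x

lemma edgeworthApprox_sub_edgeworthApprox_neg {p₁ p₂ : ℝ[X]}
    (hp₁ : ∀ x, p₁.eval (-x) = p₁.eval x) (hp₂ : ∀ x, p₂.eval (-x) = -p₂.eval x) (n : ℕ) (x : ℝ) :
    edgeworthApprox p₁ p₂ n x - edgeworthApprox p₁ p₂ n (-x)
      = 2 * stdNormalCDF x - 1 + 2 * (n : ℝ)⁻¹ * (p₂.eval x * stdNormalPDF x) := by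
  simp only [edgeworthApprox, stdNormalCDF_neg, stdNormalPDF_neg, hp₁, hp₂]
  ring

lemma isBigO_inv_pow_inv_rpow_of_le {a : ℝ} {k : ℕ} (hak : a ≤ k) :
    (fun n : ℕ => ((n : ℝ)⁻¹) ^ k) =O[atTop] fun n : ℕ => ((n : ℝ) ^ a)⁻¹ := by
  refine IsBigO.of_bound 1 ((eventually_ge_atTop 1).mono fun n hn => ?_)
  have hn : (1 : ℝ) ≤ n := by exact_mod_cast hn
  rw [one_mul, Real.norm_of_nonneg (by positivity), Real.norm_of_nonneg (by positivity), inv_pow,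
    ← Real.rpow_natCast]
  exact inv_anti₀ (by positivity) (Real.rpow_le_rpow_of_exponent_le hn hak)

theorem isBigO_edgeworthApprox_symmetric_correction {p₁ p₂ : ℝ[X]}
    (hp₁ : ∀ x, p₁.eval (-x) = p₁.eval x) (hp₂ : ∀ x, p₂.eval (-x) = -p₂.eval x) (s : ℝ) :
    (fun n : ℕ => edgeworthApprox p₁ p₂ n (s + -p₂.eval s / n)
        - edgeworthApprox p₁ p₂ n (-(s + -p₂.eval s / n)) - (2 * stdNormalCDF s - 1))
      =O[atTop] fun n : ℕ => ((n : ℝ) ^ ((3 : ℝ) / 2))⁻¹ := by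
  set D := -p₂.eval s
  set x : ℕ → ℝ := fun n => s + D / n
  set g : ℝ → ℝ := fun t => p₂.eval t * stdNormalPDF t
  have hxs (n : ℕ) : x n - s = D * (n : ℝ)⁻¹ := by simp [x, div_eq_mul_inv]
  have hx : Tendsto x atTop (𝓝 s) := by
    simpa [x, div_eq_mul_inv] using tendsto_const_nhds.add
      ((tendsto_inv_atTop_nhds_zero_nat (𝕜 := ℝ)).const_mul D)
  have hdecomp (n : ℕ) : edgeworthApprox p₁ p₂ n (x n) - edgeworthApprox p₁ p₂ n (-x n)
      - (2 * stdNormalCDF s - 1) = 2 * (stdNormalCDF (x n) - stdNormalCDF s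
        - (x n - s) * stdNormalPDF s) + 2 * ((n : ℝ)⁻¹ * (g (x n) - g s)) := by
    rw [edgeworthApprox_sub_edgeworthApprox_neg hp₁ hp₂, hxs]
    simp only [g, D]
    ring
  have hΦ : (fun n : ℕ => stdNormalCDF (x n) - stdNormalCDF s - (x n - s) * stdNormalPDF s)
      =O[atTop] fun n : ℕ => ((n : ℝ)⁻¹) ^ 2 := by
    refine IsBigO.of_bound (D ^ 2) (Eventually.of_forall fun n => ?_)
    have := norm_image_sub_sub_smul_deriv_le_of_lipschitzWith hasDerivAt_stdNormalCDF
      lipschitzWith_one_stdNormalPDF s (x n)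
    rw [norm_pow, norm_inv, RCLike.norm_natCast, ← mul_pow, ← hxs]
    simpa using this
  have hg : (fun n : ℕ => (n : ℝ)⁻¹ * (g (x n) - g s)) =O[atTop] fun n : ℕ => ((n : ℝ)⁻¹) ^ 2 := by
    have hgs : HasDerivAt g _ s := (p₂.hasDerivAt s).mul (hasDerivAt_stdNormalPDF s)
    have := (isBigO_refl (fun n : ℕ => (n : ℝ)⁻¹) atTop).mul (hgs.isBigO_sub.comp_tendsto hx)
    refine this.trans ((isBigO_const_mul_self D _ atTop).congr_left fun n => ?_)
    rw [Function.comp_apply, hxs]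
    ring
  exact (((hΦ.const_mul_left 2).add (hg.const_mul_left 2)).trans
    (isBigO_inv_pow_inv_rpow_of_le (by norm_num))).congr_left fun n => (hdecomp n).symm

theorem edgeworth_symmetric_interval_correction_general
    (p₁ p₂ : Polynomial ℝ)
    (hp₁ : ∀ x : ℝ, p₁.eval (-x) = p₁.eval x)
    (hp₂ : ∀ x : ℝ, p₂.eval (-x) = -p₂.eval x)
    (F : ℕ → ℝ → ℝ)
    (K : ℝ)
    (hEdge : ∀ n : ℕ, 1 ≤ n → ∀ x : ℝ,
      |F n x - stdNormalCDF x - ((n : ℝ) ^ ((1 : ℝ) / 2))⁻¹ * p₁.eval x * stdNormalPDF x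
          - (n : ℝ)⁻¹ * p₂.eval x * stdNormalPDF x| ≤ K * ((n : ℝ) ^ ((3 : ℝ) / 2))⁻¹)
    (q₀ : ℝ) :
    ∃ C : ℝ, ∃ N : ℕ, ∀ n : ℕ, N ≤ n →
      |F n (Real.sqrt q₀ + (-p₂.eval (Real.sqrt q₀)) / (n : ℝ))
          - F n (-Real.sqrt q₀ - (-p₂.eval (Real.sqrt q₀)) / (n : ℝ))
          - (2 * stdNormalCDF (Real.sqrt q₀) - 1)| ≤ C * ((n : ℝ) ^ ((3 : ℝ) / 2))⁻¹ := by
  obtain ⟨C, hC⟩ := (isBigO_edgeworthApprox_symmetric_correction hp₁ hp₂ (Real.sqrt q₀)).bound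
  obtain ⟨N, hN⟩ := eventually_atTop.1 (hC.and (eventually_ge_atTop 1))
  refine ⟨2 * K + C, N, fun n hn => ?_⟩
  obtain ⟨happrox, hn1⟩ := hN n hn
  set x := Real.sqrt q₀ + -p₂.eval (Real.sqrt q₀) / n
  have hF (y : ℝ) : |F n y - edgeworthApprox p₁ p₂ n y| ≤ K * ((n : ℝ) ^ ((3 : ℝ) / 2))⁻¹ := by
    simpa only [edgeworthApprox, sub_add_eq_sub_sub] using hEdge n hn1 y
  rw [Real.norm_eq_abs, Real.norm_of_nonneg (by positivity)] at happrox
  rw [show -Real.sqrt q₀ - -p₂.eval (Real.sqrt q₀) / n = -x by ring]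
  obtain ⟨h₁, h₁'⟩ := abs_le.1 (hF x)
  obtain ⟨h₂, h₂'⟩ := abs_le.1 (hF (-x))
  obtain ⟨h₃, h₃'⟩ := abs_le.1 happrox
  exact abs_le.2 ⟨by linarith, by linarith⟩

/-- **Symmetric-interval correction via a two-term Edgeworth expansion (Section 5).**
If `F_n : ℝ → [0,1]` satisfies
`sup_x |F_n(x) − Φ(x) − n^{-1/2}p₁(x)ν(x) − n^{-1}p₂(x)ν(x)| ≤ K·n^{-3/2}`
with `p₁` an even polynomial and `p₂` an odd polynomial, then for `q₀ > 0` and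
`D = −p₂(√q₀)` one has
`F_n(√q₀ + D/n) − F_n(−√q₀ − D/n) = 2Φ(√q₀) − 1 + O(n^{-3/2})`. -/
theorem edgeworth_symmetric_interval_correction
    (p₁ p₂ : Polynomial ℝ)
    (hp₁ : ∀ x : ℝ, p₁.eval (-x) = p₁.eval x)
    (hp₂ : ∀ x : ℝ, p₂.eval (-x) = -p₂.eval x)
    (F : ℕ → ℝ → ℝ) (hF01 : ∀ n x, F n x ∈ Set.Icc (0 : ℝ) 1)
    (K : ℝ)
    (hEdge : ∀ n : ℕ, 1 ≤ n → ∀ x : ℝ,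
      |F n x - stdNormalCDF x - ((n : ℝ) ^ ((1 : ℝ) / 2))⁻¹ * p₁.eval x * stdNormalPDF x
          - (n : ℝ)⁻¹ * p₂.eval x * stdNormalPDF x| ≤ K * ((n : ℝ) ^ ((3 : ℝ) / 2))⁻¹)
    (q₀ : ℝ) (hq₀ : 0 < q₀) :
    ∃ C : ℝ, ∃ N : ℕ, ∀ n : ℕ, N ≤ n →
      |F n (Real.sqrt q₀ + (-p₂.eval (Real.sqrt q₀)) / (n : ℝ))
          - F n (-Real.sqrt q₀ - (-p₂.eval (Real.sqrt q₀)) / (n : ℝ))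
          - (2 * stdNormalCDF (Real.sqrt q₀) - 1)| ≤ C * ((n : ℝ) ^ ((3 : ℝ) / 2))⁻¹ :=
  edgeworth_symmetric_interval_correction_general p₁ p₂ hp₁ hp₂ F K hEdge q₀
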